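/- arXiv:2007.14082 — 4 statements merged into one kernel-verified Lean document; each statement's English description precedes it below -/
import Mathlib

section
/- Let K ⊂ ℝ be a compact set, M > 0, f₊ an M-transfer function, and F a class of functions from K to ℝ that is uniformly dense in C(K, ℝ). Then the composed class f₊ ∘ F = {f₊ ∘ h : h ∈ F} is uniformly dense in C(K, ℝ₊₊); that is, for every continuous f : K → (0, ∞) and every ε > 0 there exists h ∈ F such that sup_{x ∈ K} |f₊(h(x)) − f(x)| < ε. -/
open Set

/-- If a nonnegative function is strictly monotone on its positivity set and continuous,
then the positivity set is "interval-convex": between two points of positivity, the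
function stays positive. -/
lemma transfer_icc_subset_pos (fp : ℝ → ℝ) (hc : Continuous fp)
    (hnn : ∀ x : ℝ, 0 ≤ fp x)
    (hmono : StrictMonoOn fp {x : ℝ | 0 < fp x}) {a b : ℝ}
    (ha : 0 < fp a) (_hb : 0 < fp b) :
    ∀ x ∈ Set.Icc a b, 0 < fp x := by
  rintro x ⟨hax, hxb⟩
  rcases eq_or_lt_of_le hax with rfl | hax'
  · exact ha
  by_contra hx0'
  push_neg at hx0'
  have hx0 : fp x = 0 := le_antisymm hx0' (hnn x)
  set T : Set ℝ := Set.Icc a x ∩ fp ⁻¹' {0} with hT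
  have hTne : T.Nonempty := ⟨x, ⟨⟨hax, le_refl x⟩, hx0⟩⟩
  have hTc : IsClosed T := isClosed_Icc.inter (isClosed_singleton.preimage hc)
  have hTbdd : BddBelow T := ⟨a, fun y hy => hy.1.1⟩
  set t := sInf T with htdef
  have htT : t ∈ T := hTc.csInf_mem hTne hTbdd
  have ht0 : fp t = 0 := htT.2
  have hat : a < t := by
    rcases eq_or_lt_of_le htT.1.1 with h | h
    · exact absurd (h ▸ ht0) ha.ne'
    · exact h
  have key : ∀ y ∈ Set.Ioo a t, fp a ≤ fp y := by
    rintro y ⟨hay, hyt⟩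
    have hy0 : 0 < fp y := by
      rcases (hnn y).lt_or_eq with h | h
      · exact h
      · exfalso
        have hyT : y ∈ T := ⟨⟨hay.le, hyt.le.trans htT.1.2⟩, h.symm⟩
        exact absurd (csInf_le hTbdd hyT) (not_le.2 hyt)
    exact (hmono ha hy0 hay).le
  have hlim : fp a ≤ fp t := by
    refine ge_of_tendsto (hc.continuousWithinAt : ContinuousWithinAt fp (Set.Iio t) t) ?_
    filter_upwards [Ioo_mem_nhdsLT_of_mem (Set.right_mem_Ioc.2 hat)] with y hy
    exact key y hy
  exact absurd (hlim.trans ht0.le) (not_le.2 ha)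

/-- If `fp` is an `M`-transfer function and `F` is uniformly dense in
`C(K, ℝ)` for a compact `K ⊂ ℝ`, then `fp ∘ F` is uniformly dense in `C(K, ℝ₊₊)`. -/
theorem transfer_composition_uniformly_dense
    (K : Set ℝ) (hK : IsCompact K) (M : ℝ) (hM : 0 < M)
    (fp : ℝ → ℝ)
    (hfp_nonneg : ∀ x : ℝ, 0 ≤ fp x)
    (hfp_lip : ∀ x y : ℝ, |fp x - fp y| ≤ M * |x - y|)
    (hfp_range : ∀ y : ℝ, 0 < y → ∃ x : ℝ, fp x = y)
    (hfp_mono : StrictMonoOn fp {x : ℝ | 0 < fp x})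
    (F : Set (ℝ → ℝ))
    (hF : ∀ g : ℝ → ℝ, ContinuousOn g K →
      ∀ ε : ℝ, 0 < ε → ∃ h ∈ F, ∀ x ∈ K, |h x - g x| < ε) :
    ∀ f : ℝ → ℝ, ContinuousOn f K → (∀ x ∈ K, 0 < f x) →
      ∀ ε : ℝ, 0 < ε → ∃ h ∈ F, ∀ x ∈ K, |fp (h x) - f x| < ε := by
  intro f hf hfpos ε hε
  -- `fp` is continuous
  have hc : Continuous fp := by
    have hlip : LipschitzWith (Real.toNNReal M) fp := by
      apply LipschitzWith.of_dist_le_mul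
      intro x y
      rw [Real.dist_eq, Real.dist_eq, Real.coe_toNNReal M hM.le]
      exact hfp_lip x y
    exact hlip.continuous
  rcases K.eq_empty_or_nonempty with rfl | hKne
  · obtain ⟨h, hhF, -⟩ := hF 0 continuousOn_const 1 one_pos
    exact ⟨h, hhF, by simp⟩
  -- extrema of `f` on `K`
  obtain ⟨x₀, hx₀K, hx₀min⟩ := hK.exists_isMinOn hKne hf
  obtain ⟨x₁, hx₁K, hx₁max⟩ := hK.exists_isMaxOn hKne hf
  set m : ℝ := f x₀ with hm
  set B : ℝ := f x₁ with hB
  have hm_pos : 0 < m := hfpos x₀ hx₀K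
  have hmB : m ≤ B := hx₀min hx₁K
  set m' : ℝ := m / 2 with hm'
  set B' : ℝ := B + 1 with hB'
  have hm'_pos : 0 < m' := by positivity
  have hB'_pos : 0 < B' := by linarith
  have hm'B' : m' < B' := by linarith
  obtain ⟨a, haeq⟩ := hfp_range m' hm'_pos
  obtain ⟨b, hbeq⟩ := hfp_range B' hB'_pos
  have hfa : 0 < fp a := haeq ▸ hm'_pos
  have hfb : 0 < fp b := hbeq ▸ hB'_pos
  have hab : a < b := by
    by_contra hcon
    push_neg at hcon
    rcases eq_or_lt_of_le hcon with rfl | h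
    · rw [haeq] at hbeq; linarith
    · have := hfp_mono hfb hfa h
      rw [haeq, hbeq] at this; linarith
  -- positivity on `[a, b]` and strict monotonicity there
  have hsub : ∀ x ∈ Set.Icc a b, 0 < fp x :=
    transfer_icc_subset_pos fp hc hfp_nonneg hfp_mono hfa hfb
  have hstrict : StrictMonoOn fp (Set.Icc a b) :=
    hfp_mono.mono fun x hx => hsub x hx
  have hinj : Set.InjOn fp (Set.Icc a b) := hstrict.injOn
  -- intermediate value theorem: `[m', B'] ⊆ fp '' [a, b]`
  have hIVT : Set.Icc m' B' ⊆ fp '' Set.Icc a b := by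
    rw [← haeq, ← hbeq]
    exact intermediate_value_Icc hab.le hc.continuousOn
  -- homeomorphism between `[a,b]` and its image under `fp`
  haveI : CompactSpace (Set.Icc a b) := isCompact_iff_compactSpace.mp isCompact_Icc
  set e : Set.Icc a b ≃ fp '' Set.Icc a b := Equiv.Set.imageOfInjOn fp (Set.Icc a b) hinj with he
  have hec : Continuous e := by
    apply continuous_induced_rng.2
    exact hc.comp continuous_subtype_val
  set E : Set.Icc a b ≃ₜ fp '' Set.Icc a b := hec.homeoOfEquivCompactToT2 with hE
  -- the clamping map
  set clamp : ℝ → ℝ := fun y => max m' (min B' y) with hclamp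
  have hclamp_mem : ∀ y : ℝ, clamp y ∈ Set.Icc m' B' :=
    fun y => ⟨le_max_left _ _, max_le hm'B'.le (min_le_left _ _)⟩
  have hclamp_cont : Continuous clamp := continuous_const.max (continuous_const.min continuous_id)
  -- the inverse map `q`
  set q : ℝ → ℝ := fun y => (E.symm ⟨clamp y, hIVT (hclamp_mem y)⟩ : ℝ) with hq
  have hq_cont : Continuous q := by
    apply continuous_subtype_val.comp
    exact E.symm.continuous.comp (hclamp_cont.subtype_mk _)
  have hq_inv : ∀ y ∈ Set.Icc m' B', fp (q y) = y := by
    intro y hy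
    have h1 : clamp y = y := by
      rw [hclamp]
      simp only
      rw [min_eq_right hy.2, max_eq_right hy.1]
    have h2 : ∀ u : Set.Icc a b, (e u : ℝ) = fp u := fun u => rfl
    have h3 : (E (E.symm ⟨clamp y, hIVT (hclamp_mem y)⟩) : ℝ) = clamp y := by
      rw [E.apply_symm_apply]
    have h4 : (E (E.symm ⟨clamp y, hIVT (hclamp_mem y)⟩) : ℝ)
        = fp (E.symm ⟨clamp y, hIVT (hclamp_mem y)⟩ : ℝ) := h2 _
    rw [hq]
    simp only
    rw [← h4, h3, h1]
  -- the target function `g = q ∘ f`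
  have hg_cont : ContinuousOn (fun x => q (f x)) K := hq_cont.comp_continuousOn hf
  obtain ⟨h, hhF, hclose⟩ := hF (fun x => q (f x)) hg_cont (ε / M) (by positivity)
  refine ⟨h, hhF, fun x hx => ?_⟩
  have hfx_mem : f x ∈ Set.Icc m' B' := by
    constructor
    · have : m ≤ f x := hx₀min hx
      linarith
    · have : f x ≤ B := hx₁max hx
      linarith
  have hfpg : fp (q (f x)) = f x := hq_inv (f x) hfx_mem
  calc |fp (h x) - f x| = |fp (h x) - fp (q (f x))| := by rw [hfpg]
    _ ≤ M * |h x - q (f x)| := hfp_lip _ _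
    _ < M * (ε / M) := by
        exact mul_lt_mul_of_pos_left (hclose x hx) hM
    _ = ε := by field_simp
end

section
/- Let K ⊂ ℝ be compact, M > 0, and f₊ an M-transfer function. Let φ : ℝ × 𝒫 → ℝ be a basis function such that each φ(·; p) restricted to K is continuous, and suppose: (1) Σ(φ) is closed under pointwise products and under multiplication by real scalars (so that Σ(φ), restricted to K, is a subalgebra of C(K, ℝ)); (2) for any distinct x, y ∈ K there exists p ∈ 𝒫 with φ(x; p) ≠ φ(y; p); (3) for every x₀ ∈ K there exists p ∈ 𝒫 with φ(x₀; p) ≠ 0. Then the class f₊ ∘ Σ(φ) = {f₊ ∘ h : h ∈ Σ(φ)} is uniformly dense in C(K, ℝ₊₊). -/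
/-!
On the open set where `fp > 0` the transfer function is a continuous strictly increasing bijection
onto `(0, ∞)`, so its inverse is continuous there and every continuous `f > 0` on `K` equals
`fp ∘ g` for a continuous `g`. Since `fp` is `M`-Lipschitz, it suffices to approximate `g`
uniformly by elements of `Σ(φ)`. Stone–Weierstrass applies to the unital algebra `ℝ + Σ(φ)|_K`;
to get rid of the constant term, approximate `g / e` instead, where `e ∈ Σ(φ)` is positive on `K`
(a finite sum of squares `φ(·; p)²`, by compactness and the nonvanishing hypothesis), and multiply
back by `e`: `Σ(φ)` absorbs multiplication by `c + h`.
-/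

/-- The class `Σ(φ)` of finite sums of basis functions `φ(·; p)`. -/
def SumBasis {P : Type*} (φ : ℝ → P → ℝ) : Set (ℝ → ℝ) :=
  {h : ℝ → ℝ | ∃ (J : ℕ) (p : Fin J → P), ∀ x : ℝ, h x = ∑ j : Fin J, φ x (p j)}

open Set Filter Topology Function

theorem StrictMonoOn.continuousOn_invFunOn {α β : Type*} [LinearOrder α] [TopologicalSpace α]
    [OrderTopology α] [DenselyOrdered α] [Nonempty α] [LinearOrder β] [TopologicalSpace β]
    [OrderTopology β] {f : α → β} {s : Set α} {t : Set β} (hmono : StrictMonoOn f s)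
    (hf : ContinuousOn f s) (hs : IsOpen s) (ht : IsOpen t) (hts : t ⊆ f '' s) :
    ContinuousOn (invFunOn f s) t := by
  have hinv_mono : StrictMonoOn (invFunOn f s) t := fun y₁ h₁ y₂ h₂ h ↦
    (hmono.lt_iff_lt (invFunOn_mem (hts h₁)) (invFunOn_mem (hts h₂))).1
      (by rwa [invFunOn_eq (hts h₁), invFunOn_eq (hts h₂)])
  have hopen : IsOpen (s ∩ f ⁻¹' t) := hf.isOpen_inter_preimage hs ht
  have himage : s ∩ f ⁻¹' t ⊆ invFunOn f s '' t := fun x ⟨hx, hfx⟩ ↦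
    ⟨f x, hfx, hmono.injOn.leftInvOn_invFunOn hx⟩
  intro y hy
  obtain ⟨hgy, hfgy⟩ := invFunOn_pos (hts hy)
  refine (hinv_mono.continuousAt_of_image_mem_nhds (ht.mem_nhds hy) ?_).continuousWithinAt
  exact mem_of_superset (hopen.mem_nhds ⟨hgy, by rwa [mem_preimage, hfgy]⟩) himage

section SumBasis

variable {P : Type*} {φ : ℝ → P → ℝ}

theorem zero_mem_sumBasis : (fun _ ↦ 0 : ℝ → ℝ) ∈ SumBasis φ :=
  ⟨0, Fin.elim0, fun x ↦ by simp⟩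

theorem single_mem_sumBasis (p : P) : (fun x ↦ φ x p) ∈ SumBasis φ :=
  ⟨1, fun _ ↦ p, fun x ↦ by simp⟩

theorem add_mem_sumBasis {h₁ h₂ : ℝ → ℝ} (H₁ : h₁ ∈ SumBasis φ) (H₂ : h₂ ∈ SumBasis φ) :
    (fun x ↦ h₁ x + h₂ x) ∈ SumBasis φ := by
  obtain ⟨J₁, p₁, hp₁⟩ := H₁
  obtain ⟨J₂, p₂, hp₂⟩ := H₂
  exact ⟨J₁ + J₂, Fin.append p₁ p₂, fun x ↦ by simp [hp₁ x, hp₂ x, Fin.sum_univ_add]⟩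

theorem continuousOn_of_mem_sumBasis {K : Set ℝ} (hφ : ∀ p, ContinuousOn (fun x ↦ φ x p) K)
    {h : ℝ → ℝ} (H : h ∈ SumBasis φ) : ContinuousOn h K := by
  obtain ⟨J, p, hp⟩ := H
  exact (continuousOn_finsetSum _ fun j _ ↦ hφ (p j)).congr fun x _ ↦ hp x

variable (φ) in
def sumBasisSubalgebra (K : Set ℝ)
    (hmul : ∀ h₁ ∈ SumBasis φ, ∀ h₂ ∈ SumBasis φ, ∃ h₃ ∈ SumBasis φ, ∀ x ∈ K, h₃ x = h₁ x * h₂ x)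
    (hsmul : ∀ c : ℝ, ∀ h ∈ SumBasis φ, ∃ h' ∈ SumBasis φ, ∀ x ∈ K, h' x = c * h x) :
    Subalgebra ℝ C(K, ℝ) where
  carrier := {F | ∃ c : ℝ, ∃ h ∈ SumBasis φ, ∀ x : K, F x = c + h x}
  zero_mem' := ⟨0, _, zero_mem_sumBasis, fun x ↦ by simp⟩
  one_mem' := ⟨1, _, zero_mem_sumBasis, fun x ↦ by simp⟩
  add_mem' := by
    rintro F G ⟨c, h, hh, hF⟩ ⟨c', h', hh', hG⟩
    refine ⟨c + c', _, add_mem_sumBasis hh hh', fun x ↦ ?_⟩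
    simp only [ContinuousMap.add_apply, hF x, hG x]
    ring
  mul_mem' := by
    rintro F G ⟨c, h, hh, hF⟩ ⟨c', h', hh', hG⟩
    obtain ⟨u, hu, huK⟩ := hsmul c h' hh'
    obtain ⟨v, hv, hvK⟩ := hsmul c' h hh
    obtain ⟨w, hw, hwK⟩ := hmul h hh h' hh'
    refine ⟨c * c', _, add_mem_sumBasis (add_mem_sumBasis hu hv) hw, fun x ↦ ?_⟩
    simp only [ContinuousMap.mul_apply, hF x, hG x, huK x x.2, hvK x x.2, hwK x x.2]
    ring
  algebraMap_mem' c := ⟨c, _, zero_mem_sumBasis, fun x ↦ by simp⟩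

theorem separatesPoints_sumBasisSubalgebra {K : Set ℝ} (hφ : ∀ p, ContinuousOn (fun x ↦ φ x p) K)
    (hmul : ∀ h₁ ∈ SumBasis φ, ∀ h₂ ∈ SumBasis φ, ∃ h₃ ∈ SumBasis φ, ∀ x ∈ K, h₃ x = h₁ x * h₂ x)
    (hsmul : ∀ c : ℝ, ∀ h ∈ SumBasis φ, ∃ h' ∈ SumBasis φ, ∀ x ∈ K, h' x = c * h x)
    (hsep : ∀ x ∈ K, ∀ y ∈ K, x ≠ y → ∃ p : P, φ x p ≠ φ y p) :
    (sumBasisSubalgebra φ K hmul hsmul).SeparatesPoints := by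
  intro x y hxy
  obtain ⟨p, hp⟩ := hsep x x.2 y y.2 (Subtype.coe_ne_coe.2 hxy)
  exact ⟨_, ⟨⟨fun z : K ↦ φ z p, (hφ p).domRestrict⟩, ⟨0, _, single_mem_sumBasis p,
    fun z ↦ (zero_add _).symm⟩, rfl⟩, hp⟩

theorem exists_mem_sumBasis_pos {K : Set ℝ} (hK : IsCompact K)
    (hφ : ∀ p, ContinuousOn (fun x ↦ φ x p) K)
    (hmul : ∀ h₁ ∈ SumBasis φ, ∀ h₂ ∈ SumBasis φ, ∃ h₃ ∈ SumBasis φ, ∀ x ∈ K, h₃ x = h₁ x * h₂ x)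
    (hnonzero : ∀ x₀ ∈ K, ∃ p : P, φ x₀ p ≠ 0) :
    ∃ e ∈ SumBasis φ, ∀ x ∈ K, 0 < e x := by
  let Good (S : Set ℝ) : Prop := ∃ e ∈ SumBasis φ, ∀ y ∈ K, 0 ≤ e y ∧ (y ∈ S → 0 < e y)
  have hlocal : ∀ x ∈ K, ∃ T ∈ 𝓝[K] x, Good T := by
    intro x hx
    obtain ⟨p, hp⟩ := hnonzero x hx
    obtain ⟨s, hs, hsK⟩ := hmul _ (single_mem_sumBasis p) _ (single_mem_sumBasis p)
    have hsx : 0 < s x := by rw [hsK x hx]; exact mul_self_pos.2 hp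
    refine ⟨{y | 0 < s y}, ((continuousOn_of_mem_sumBasis hφ hs) x hx).eventually_const_lt hsx,
      s, hs, fun y hy ↦ ⟨?_, id⟩⟩
    rw [hsK y hy]
    exact mul_self_nonneg _
  obtain ⟨e, he, hpos⟩ : Good K := hK.induction_on
    ⟨_, zero_mem_sumBasis, fun _ _ ↦ ⟨le_rfl, False.elim⟩⟩
    (fun S T hST ⟨e, he, hgood⟩ ↦ ⟨e, he, fun y hy ↦ ⟨(hgood y hy).1, (hgood y hy).2 ∘ @hST y⟩⟩)
    (fun S T ⟨e, he, hgood⟩ ⟨e', he', hgood'⟩ ↦ ⟨_, add_mem_sumBasis he he', fun y hy ↦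
      ⟨add_nonneg (hgood y hy).1 (hgood' y hy).1, fun hyST ↦ hyST.elim
        (fun hyS ↦ add_pos_of_pos_of_nonneg ((hgood y hy).2 hyS) (hgood' y hy).1)
        (fun hyT ↦ add_pos_of_nonneg_of_pos (hgood y hy).1 ((hgood' y hy).2 hyT))⟩⟩)
    hlocal
  exact ⟨e, he, fun y hy ↦ (hpos y hy).2 hy⟩

theorem exists_mem_sumBasis_near {K : Set ℝ} (hK : IsCompact K)
    (hφ : ∀ p, ContinuousOn (fun x ↦ φ x p) K)
    (hmul : ∀ h₁ ∈ SumBasis φ, ∀ h₂ ∈ SumBasis φ, ∃ h₃ ∈ SumBasis φ, ∀ x ∈ K, h₃ x = h₁ x * h₂ x)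
    (hsmul : ∀ c : ℝ, ∀ h ∈ SumBasis φ, ∃ h' ∈ SumBasis φ, ∀ x ∈ K, h' x = c * h x)
    (hsep : ∀ x ∈ K, ∀ y ∈ K, x ≠ y → ∃ p : P, φ x p ≠ φ y p)
    (hnonzero : ∀ x₀ ∈ K, ∃ p : P, φ x₀ p ≠ 0) {q : ℝ → ℝ} (hq : ContinuousOn q K) {ε : ℝ}
    (hε : 0 < ε) : ∃ h ∈ SumBasis φ, ∀ x ∈ K, |h x - q x| < ε := by
  have : CompactSpace K := isCompact_iff_compactSpace.mp hK
  obtain ⟨e, he, he_pos⟩ := exists_mem_sumBasis_pos hK hφ hmul hnonzero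
  have he_cont := continuousOn_of_mem_sumBasis hφ he
  obtain ⟨C, hC⟩ := hK.bddAbove_image he_cont
  have hC_pos : 0 < max C 1 := lt_max_of_lt_right one_pos
  have he_le : ∀ x ∈ K, e x ≤ max C 1 := fun x hx ↦ (hC (mem_image_of_mem e hx)).trans
    (le_max_left _ _)
  have hqe : Continuous fun x : K ↦ q x / e x :=
    hq.domRestrict.div he_cont.domRestrict fun x ↦ (he_pos x x.2).ne'
  obtain ⟨⟨u, c, h₀, hh₀, hu⟩, hnear⟩ :=
    ContinuousMap.exists_mem_subalgebra_near_continuous_of_separatesPoints _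
      (separatesPoints_sumBasisSubalgebra hφ hmul hsmul hsep) _ hqe (ε / max C 1) (by positivity)
  obtain ⟨v, hv, hvK⟩ := hsmul c e he
  obtain ⟨w, hw, hwK⟩ := hmul h₀ hh₀ e he
  refine ⟨_, add_mem_sumBasis hv hw, fun x hx ↦ ?_⟩
  have hux : |c + h₀ x - q x / e x| < ε / max C 1 := by
    simpa [hu ⟨x, hx⟩] using hnear ⟨x, hx⟩
  have hfactor : v x + w x - q x = (c + h₀ x - q x / e x) * e x := by
    rw [hvK x hx, hwK x hx]
    field_simp [(he_pos x hx).ne']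
  calc |v x + w x - q x| = |c + h₀ x - q x / e x| * e x := by
        rw [hfactor, abs_mul, abs_of_pos (he_pos x hx)]
    _ ≤ |c + h₀ x - q x / e x| * max C 1 := by gcongr; exact he_le x hx
    _ < ε / max C 1 * max C 1 := by gcongr
    _ = ε := div_mul_cancel₀ ε hC_pos.ne'

end SumBasis

theorem basis_stone_weierstrass_transfer_general
    {P : Type*} (K : Set ℝ) (hK : IsCompact K) (M : ℝ) (hM : 0 < M)
    (fp : ℝ → ℝ)
    (hfp_lip : ∀ x y : ℝ, |fp x - fp y| ≤ M * |x - y|)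
    (hfp_range : ∀ y : ℝ, 0 < y → ∃ x : ℝ, fp x = y)
    (hfp_mono : StrictMonoOn fp {x : ℝ | 0 < fp x})
    (φ : ℝ → P → ℝ)
    (hφ_cont : ∀ p : P, ContinuousOn (fun x => φ x p) K)
    (hmul : ∀ h₁ ∈ SumBasis φ, ∀ h₂ ∈ SumBasis φ,
      ∃ h₃ ∈ SumBasis φ, ∀ x ∈ K, h₃ x = h₁ x * h₂ x)
    (hsmul : ∀ c : ℝ, ∀ h ∈ SumBasis φ,
      ∃ h' ∈ SumBasis φ, ∀ x ∈ K, h' x = c * h x)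
    (hsep : ∀ x ∈ K, ∀ y ∈ K, x ≠ y → ∃ p : P, φ x p ≠ φ y p)
    (hnonzero : ∀ x₀ ∈ K, ∃ p : P, φ x₀ p ≠ 0) :
    ∀ f : ℝ → ℝ, ContinuousOn f K → (∀ x ∈ K, 0 < f x) →
      ∀ ε : ℝ, 0 < ε → ∃ h ∈ SumBasis φ, ∀ x ∈ K, |fp (h x) - f x| < ε := by
  intro f hf hf_pos ε hε
  have hfp_cont : Continuous fp := (LipschitzWith.of_dist_le' hfp_lip).continuous
  have hS : IsOpen {x | 0 < fp x} := isOpen_lt continuous_const hfp_cont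
  have hrange : Ioi 0 ⊆ fp '' {x | 0 < fp x} := fun y hy ↦
    let ⟨x, hx⟩ := hfp_range y hy
    ⟨x, show 0 < fp x by rwa [hx], hx⟩
  set g := invFunOn fp {x | 0 < fp x}
  have hg : ContinuousOn g (Ioi 0) :=
    hfp_mono.continuousOn_invFunOn hfp_cont.continuousOn hS isOpen_Ioi hrange
  obtain ⟨h, hh, hnear⟩ := exists_mem_sumBasis_near hK hφ_cont hmul hsmul hsep hnonzero
    (hg.comp hf hf_pos) (div_pos hε hM)
  refine ⟨h, hh, fun x hx ↦ ?_⟩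
  calc |fp (h x) - f x| = |fp (h x) - fp (g (f x))| := by
        rw [invFunOn_eq (hrange (hf_pos x hx))]
    _ ≤ M * |h x - g (f x)| := hfp_lip _ _
    _ < M * (ε / M) := by gcongr; exact hnear x hx
    _ = ε := mul_div_cancel₀ ε hM.ne'

/-- If the basis function `φ` makes `Σ(φ)` (restricted to a
compact `K ⊂ ℝ`) a point-separating, nowhere-vanishing subalgebra of `C(K, ℝ)`,
and `fp` is an `M`-transfer function, then `fp ∘ Σ(φ)` is uniformly dense in
`C(K, ℝ₊₊)`. -/
theorem basis_stone_weierstrass_transfer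
    {P : Type*} (K : Set ℝ) (hK : IsCompact K) (M : ℝ) (hM : 0 < M)
    (fp : ℝ → ℝ)
    (hfp_nonneg : ∀ x : ℝ, 0 ≤ fp x)
    (hfp_lip : ∀ x y : ℝ, |fp x - fp y| ≤ M * |x - y|)
    (hfp_range : ∀ y : ℝ, 0 < y → ∃ x : ℝ, fp x = y)
    (hfp_mono : StrictMonoOn fp {x : ℝ | 0 < fp x})
    (φ : ℝ → P → ℝ)
    (hφ_cont : ∀ p : P, ContinuousOn (fun x => φ x p) K)
    (hmul : ∀ h₁ ∈ SumBasis φ, ∀ h₂ ∈ SumBasis φ,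
      ∃ h₃ ∈ SumBasis φ, ∀ x ∈ K, h₃ x = h₁ x * h₂ x)
    (hsmul : ∀ c : ℝ, ∀ h ∈ SumBasis φ,
      ∃ h' ∈ SumBasis φ, ∀ x ∈ K, h' x = c * h x)
    (hsep : ∀ x ∈ K, ∀ y ∈ K, x ≠ y → ∃ p : P, φ x p ≠ φ y p)
    (hnonzero : ∀ x₀ ∈ K, ∃ p : P, φ x₀ p ≠ 0) :
    ∀ f : ℝ → ℝ, ContinuousOn f K → (∀ x ∈ K, 0 < f x) →
      ∀ ε : ℝ, 0 < ε → ∃ h ∈ SumBasis φ, ∀ x ∈ K, |fp (h x) - f x| < ε :=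
  basis_stone_weierstrass_transfer_general K hK M hM fp hfp_lip hfp_range hfp_mono φ hφ_cont hmul
    hsmul hsep hnonzero
end

section
/- Let 0 = t₀ < t₁ < ⋯ < t_N ≤ T be event times and let λ* : (0, T] → (0, ∞) be an intensity function that is piecewise continuous with respect to this partition, meaning that for each i ∈ {1, …, N+1} (with t_{N+1} = T) the segment u_i(τ) = λ*(t_{i−1} + τ) for τ ∈ (0, t_i − t_{i−1}] extends to a continuous strictly positive function u_i : [0, T] → (0, ∞). Let 𝒫 ⊆ ℝ^m and let û : [0, T] × 𝒫 → ℝ be jointly continuous such that the family F = {û(·; p) : p ∈ 𝒫} is uniformly dense in C([0, T], ℝ₊₊). Then for every ε > 0 there exist a dimension d, matrices W ∈ ℝ^{d×d}, A ∈ ℝ^{m×d}, vectors v, b, h₀ ∈ ℝ^d such that, defining h_i = σ(W h_{i−1} + v t_{i−1} + b) (with the sigmoid σ applied componentwise, t_0 = 0), p̂_i = A h_i, and λ̂(t) = û(t − t_{i−1}; p̂_i) for t ∈ (t_{i−1}, t_i], one has sup_{t ∈ (0, T]} |λ̂(t) − λ*(t)| < ε. -/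
/-- The sigmoid function `σ(x) = 1 / (1 + exp (−x))`. -/
noncomputable def sigmoid (x : ℝ) : ℝ := 1 / (1 + Real.exp (-x))

open Polynomial in
/-- Kernel triviality for Cauchy-type matrices `1 / (x k + y j)`. -/
lemma cauchy_mulVec_eq_zero {n : ℕ} (x y : Fin n → ℝ)
    (hx : Function.Injective x) (hy : Function.Injective y)
    (hpos : ∀ k j, 0 < x k + y j)
    (c : Fin n → ℝ)
    (hc : (Matrix.of fun k j => 1 / (x k + y j)).mulVec c = 0) : c = 0 := by
  rcases Nat.eq_zero_or_pos n with hn | hn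
  · subst hn; funext j; exact j.elim0
  set p : ℝ[X] := ∑ j, C (c j) * ∏ l ∈ Finset.univ.erase j, (X + C (y l)) with hp
  have hdeg : p.natDegree < n := by
    have : p.natDegree ≤ n - 1 := by
      apply Polynomial.natDegree_sum_le_of_forall_le
      intro j _
      refine le_trans (Polynomial.natDegree_C_mul_le _ _) ?_
      refine le_trans (Polynomial.natDegree_prod_le _ _) ?_
      have : ∀ l ∈ Finset.univ.erase j, (X + C (y l)).natDegree = 1 := by
        intro l _; exact Polynomial.natDegree_X_add_C _
      rw [Finset.sum_congr rfl this]
      simp [Finset.card_erase_of_mem]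
    omega
  have heval : ∀ k, p.eval (x k) = 0 := by
    intro k
    have hck : ∑ j, (1 / (x k + y j)) * c j = 0 := by
      have := congrFun hc k
      simpa [Matrix.mulVec, dotProduct] using this
    have hne : ∀ j, x k + y j ≠ 0 := fun j => ne_of_gt (hpos k j)
    have : p.eval (x k)
        = ∑ j, (∏ l, (x k + y l)) * ((1 / (x k + y j)) * c j) := by
      rw [hp]
      simp only [Polynomial.eval_finset_sum, Polynomial.eval_mul, Polynomial.eval_C,
        Polynomial.eval_prod, Polynomial.eval_add, Polynomial.eval_X]
      refine Finset.sum_congr rfl (fun j _ => ?_)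
      rw [← Finset.mul_prod_erase _ (fun l => x k + y l) (Finset.mem_univ j)]
      field_simp
      rw [eq_div_iff (hne j)]
    rw [this, ← Finset.mul_sum, hck, mul_zero]
  have hp0 : p = 0 := by
    refine Polynomial.eq_zero_of_natDegree_lt_card_of_eval_eq_zero p hx heval ?_
    simpa using hdeg
  funext j
  have hev : p.eval (-(y j)) = 0 := by rw [hp0]; simp
  rw [hp] at hev
  simp only [Polynomial.eval_finset_sum, Polynomial.eval_mul, Polynomial.eval_C,
    Polynomial.eval_prod, Polynomial.eval_add, Polynomial.eval_X] at hev
  rw [Finset.sum_eq_single j] at hev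
  · have hprod : ∏ l ∈ Finset.univ.erase j, (-(y j) + y l) ≠ 0 := by
      rw [Finset.prod_ne_zero_iff]
      intro l hl
      have : y l ≠ y j := fun h => (Finset.mem_erase.mp hl).1 (hy h)
      intro h; apply this; linarith
    have := mul_eq_zero.mp hev
    rcases this with h | h
    · exact h
    · exact absurd h hprod
  · intro j' _ hj'
    apply mul_eq_zero_of_right
    apply Finset.prod_eq_zero (Finset.mem_erase.mpr ⟨fun h => hj' h.symm, Finset.mem_univ j⟩)
    ring
  · intro h; exact absurd (Finset.mem_univ j) h

/-- Universal approximation of a piecewise-continuous intensity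
function by an RNN parameterising a uniformly dense family `û(·; p)`. -/
theorem rnn_universal_approximation_intensity
    (T : ℝ) (hT : 0 < T) (N : ℕ) (hN : 1 ≤ N) (t : ℕ → ℝ)
    (ht0 : t 0 = 0) (htmono : ∀ i < N, t i < t (i + 1))
    (htN : t N ≤ T) (htlast : t (N + 1) = T)
    (lam : ℝ → ℝ)
    (u : ℕ → ℝ → ℝ)
    (hu_cont : ∀ i, 1 ≤ i → i ≤ N + 1 → ContinuousOn (u i) (Set.Icc 0 T))
    (hu_pos : ∀ i, 1 ≤ i → i ≤ N + 1 → ∀ τ ∈ Set.Icc (0 : ℝ) T, 0 < u i τ)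
    (hu_seg : ∀ i, 1 ≤ i → i ≤ N + 1 →
      ∀ τ ∈ Set.Ioc (0 : ℝ) (t i - t (i - 1)), lam (t (i - 1) + τ) = u i τ)
    (m : ℕ) (P : Set (Fin m → ℝ))
    (uhat : ℝ → (Fin m → ℝ) → ℝ)
    (huhat_cont : ContinuousOn (fun q : ℝ × (Fin m → ℝ) => uhat q.1 q.2)
      (Set.Icc 0 T ×ˢ P))
    (hdense : ∀ f : ℝ → ℝ, ContinuousOn f (Set.Icc 0 T) →
      (∀ τ ∈ Set.Icc (0 : ℝ) T, 0 < f τ) →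
      ∀ ε : ℝ, 0 < ε → ∃ p ∈ P, ∀ τ ∈ Set.Icc (0 : ℝ) T, |uhat τ p - f τ| < ε)
    (ε : ℝ) (hε : 0 < ε) :
    ∃ (d : ℕ) (W : Matrix (Fin d) (Fin d) ℝ) (A : Matrix (Fin m) (Fin d) ℝ)
      (v b h₀ : Fin d → ℝ),
      ∀ h : ℕ → (Fin d → ℝ),
        h 0 = h₀ →
        (∀ i, 1 ≤ i →
          h i = fun k => sigmoid ((W.mulVec (h (i - 1)) + t (i - 1) • v + b) k)) →
        ∀ i, 1 ≤ i → i ≤ N + 1 →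
          A.mulVec (h i) ∈ P ∧
          ∀ s ∈ Set.Ioc (t (i - 1)) (t i),
            |uhat (s - t (i - 1)) (A.mulVec (h i)) - lam s| < ε := by
  classical
  -- monotonicity facts about `t`
  have tlt : ∀ b ≤ N, ∀ a < b, t a < t b := by
    intro b
    induction b with
    | zero => intro _ a ha; omega
    | succ n ih =>
      intro hb a ha
      have hn : n < N := by omega
      rcases Nat.lt_or_ge a n with h | h
      · exact lt_trans (ih (by omega) a h) (htmono n hn)
      · have : a = n := by omega
        subst this; exact htmono a hn
  have tle : ∀ a b : ℕ, a ≤ b → b ≤ N + 1 → t a ≤ t b := by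
    intro a b hab hb
    rcases eq_or_lt_of_le hab with rfl | hlt
    · exact le_refl _
    rcases Nat.lt_or_ge b (N + 1) with h | h
    · exact (tlt b (by omega) a hlt).le
    · have hb1 : b = N + 1 := by omega
      subst hb1
      have ha : a ≤ N := by omega
      have : t a ≤ t N := by
        rcases eq_or_lt_of_le ha with rfl | h2
        · exact le_refl _
        · exact (tlt N le_rfl a h2).le
      rw [htlast]; exact le_trans this htN
  -- choose parameters approximating each segment
  have hex : ∀ j : Fin (N + 1), ∃ q ∈ P,
      ∀ τ ∈ Set.Icc (0 : ℝ) T, |uhat τ q - u ((j : ℕ) + 1) τ| < ε := by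
    intro j
    have hj : (j : ℕ) + 1 ≤ N + 1 := by omega
    exact hdense (u ((j : ℕ) + 1)) (hu_cont _ (by omega) hj)
      (hu_pos _ (by omega) hj) ε hε
  choose p hpP hp using hex
  -- the state matrix
  set H : Matrix (Fin (N + 1)) (Fin (N + 1)) ℝ :=
    Matrix.of (fun k j : Fin (N + 1) => sigmoid (((k : ℕ) : ℝ) - t (j : ℕ))) with hHdef
  -- H is invertible
  have hHfact : H = Matrix.diagonal (fun k : Fin (N + 1) => Real.exp ((k : ℕ) : ℝ)) *
      Matrix.of (fun k j : Fin (N + 1) =>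
        1 / (Real.exp ((k : ℕ) : ℝ) + Real.exp (t (j : ℕ)))) := by
    ext k j
    rw [Matrix.diagonal_mul, hHdef]
    simp only [Matrix.of_apply]
    rw [sigmoid, neg_sub, Real.exp_sub]
    have h1 : Real.exp (((k : ℕ) : ℝ)) ≠ 0 := Real.exp_ne_zero _
    have h2 : Real.exp ((((k : ℕ) : ℝ))) + Real.exp (t (j : ℕ)) ≠ 0 := by positivity
    field_simp
  have hxinj : Function.Injective (fun k : Fin (N + 1) => Real.exp ((k : ℕ) : ℝ)) := by
    intro a b hab
    have := Real.exp_injective hab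
    have : ((a : ℕ) : ℝ) = ((b : ℕ) : ℝ) := this
    exact Fin.ext (by exact_mod_cast this)
  have hyinj : Function.Injective (fun j : Fin (N + 1) => Real.exp (t (j : ℕ))) := by
    intro a b hab
    have ht' : t (a : ℕ) = t (b : ℕ) := Real.exp_injective hab
    by_contra hne
    have hne' : (a : ℕ) ≠ (b : ℕ) := fun h => hne (Fin.ext h)
    rcases Nat.lt_or_ge (a : ℕ) (b : ℕ) with h | h
    · exact absurd ht' (ne_of_lt (tlt _ (by omega) _ h))
    · have h' : (b : ℕ) < (a : ℕ) := by omega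
      exact absurd ht'.symm (ne_of_lt (tlt _ (by omega) _ h'))
  have hCunit : IsUnit (Matrix.of (fun k j : Fin (N + 1) =>
      1 / (Real.exp ((k : ℕ) : ℝ) + Real.exp (t (j : ℕ))))) := by
    rw [← Matrix.mulVec_injective_iff_isUnit]
    intro a b hab
    have h0 : (Matrix.of (fun k j : Fin (N + 1) =>
        1 / (Real.exp ((k : ℕ) : ℝ) + Real.exp (t (j : ℕ))))).mulVec (a - b) = 0 := by
      rw [Matrix.mulVec_sub, hab, sub_self]
    have := cauchy_mulVec_eq_zero _ _ hxinj hyinj (fun k j => by positivity) _ h0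
    exact sub_eq_zero.mp this
  have hDunit : IsUnit (Matrix.diagonal (fun k : Fin (N + 1) => Real.exp ((k : ℕ) : ℝ))) := by
    rw [Matrix.isUnit_iff_isUnit_det, Matrix.det_diagonal, isUnit_iff_ne_zero]
    exact Finset.prod_ne_zero_iff.mpr (fun k _ => Real.exp_ne_zero _)
  have hHunit : IsUnit H := by rw [hHfact]; exact hDunit.mul hCunit
  have hHdet : IsUnit H.det := (Matrix.isUnit_iff_isUnit_det H).mp hHunit
  -- the parameter matrix
  set Pmat : Matrix (Fin m) (Fin (N + 1)) ℝ := Matrix.of (fun a j => p j a) with hPdef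
  refine ⟨N + 1, 0, Pmat * H⁻¹, (fun _ => (-1 : ℝ)), (fun k => ((k : ℕ) : ℝ)), 0, ?_⟩
  intro h h0 hrec i hi1 hi2
  have hAH : Pmat * H⁻¹ * H = Pmat := by
    rw [Matrix.mul_assoc, Matrix.nonsing_inv_mul H hHdet, Matrix.mul_one]
  -- the state at step i
  have hhi : h i = fun k : Fin (N + 1) => sigmoid (((k : ℕ) : ℝ) - t (i - 1)) := by
    rw [hrec i hi1]
    funext k
    simp only [Matrix.zero_mulVec, Pi.add_apply, Pi.smul_apply, Pi.zero_apply,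
      smul_eq_mul, zero_add]
    congr 1
    ring
  set j : Fin (N + 1) := ⟨i - 1, by omega⟩ with hjdef
  have hcol : h i = H.mulVec (Pi.single j 1) := by
    funext k
    rw [hhi, Matrix.mulVec_single]
    simp [hHdef, hjdef]
  have hA : (Pmat * H⁻¹).mulVec (h i) = p j := by
    rw [hcol, Matrix.mulVec_mulVec, hAH]
    funext a
    rw [Matrix.mulVec_single]
    simp [hPdef]
  rw [hA]
  refine ⟨hpP j, ?_⟩
  intro s hs
  have hji : (j : ℕ) + 1 = i := by simp [hjdef]; omega
  have hτIoc : s - t (i - 1) ∈ Set.Ioc (0 : ℝ) (t i - t (i - 1)) :=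
    ⟨by linarith [hs.1], by linarith [hs.2]⟩
  have hlam : lam s = u i (s - t (i - 1)) := by
    have := hu_seg i hi1 hi2 (s - t (i - 1)) hτIoc
    rw [show t (i - 1) + (s - t (i - 1)) = s from by ring] at this
    exact this
  have ht_i_le : t i ≤ T := by
    have := tle i (N + 1) hi2 le_rfl
    rw [htlast] at this; exact this
  have ht_im1_nonneg : 0 ≤ t (i - 1) := by
    have := tle 0 (i - 1) (Nat.zero_le _) (by omega)
    rw [ht0] at this; exact this
  have hτIcc : s - t (i - 1) ∈ Set.Icc (0 : ℝ) T :=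
    ⟨by linarith [hs.1], by linarith [hs.2]⟩
  have := hp j (s - t (i - 1)) hτIcc
  rw [hji] at this
  rw [hlam]
  exact this
end

section
/- For any compact set K ⊂ ℝ, the class f_SP ∘ Σ(φ_EXP) of functions x ↦ log(1 + exp(Σ_{j=1}^{J} α_j exp(β_j x))), with J ∈ ℕ and (α_j, β_j) ∈ ℝ², is uniformly dense in C(K, ℝ₊₊): for every continuous f : K → (0, ∞) and ε > 0 there exist J and parameters (α_j, β_j) with sup_{x ∈ K} |log(1 + exp(Σ_j α_j exp(β_j x))) − f(x)| < ε. -/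
/-!
Write `f = softplus ∘ g` with `g = log (exp f - 1)`, which is continuous on `K` because `f > 0`.
Substituting `y = exp x`, sums `∑ αⱼ exp (j x)` are polynomials in `y`, and Stone–Weierstrass
approximates `g ∘ log` by polynomials uniformly on the compact set `exp '' K`; softplus is `1`-Lipschitz, so the error
survives composition with it.
-/

open Polynomial

theorem exists_polynomial_near_of_continuousOn_of_isCompact {s : Set ℝ} (hs : IsCompact s)
    {f : ℝ → ℝ} (hf : ContinuousOn f s) {ε : ℝ} (hε : 0 < ε) :
    ∃ p : ℝ[X], ∀ x ∈ s, |p.eval x - f x| < ε := by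
  have : CompactSpace s := isCompact_iff_compactSpace.mp hs
  let F : C(s, ℝ) := ⟨s.domRestrict f, hf.domRestrict⟩
  have hF : F ∈ (polynomialFunctions s).topologicalClosure := by
    rw [polynomialFunctions.topologicalClosure]
    trivial
  obtain ⟨-, hp, ⟨p, -, rfl⟩⟩ :=
    (Metric.nhds_basis_ball.frequently_iff.mp (mem_closure_iff_frequently.mp hF)) ε hε
  rw [Metric.mem_ball, dist_eq_norm, ContinuousMap.norm_lt_iff _ hε] at hp
  exact ⟨p, fun x hx => hp ⟨x, hx⟩⟩

theorem sum_coeff_mul_exp_eq_eval_exp (p : ℝ[X]) (x : ℝ) :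
    ∑ j : Fin (p.natDegree + 1), p.coeff j * Real.exp (j * x) = p.eval (Real.exp x) := by
  rw [eval_eq_sum_range, ← Fin.sum_univ_eq_sum_range]
  simp only [Real.exp_nat_mul]

theorem exists_expSum_near_of_continuousOn {K : Set ℝ} (hK : IsCompact K)
    {g : ℝ → ℝ} (hg : ContinuousOn g K) {ε : ℝ} (hε : 0 < ε) :
    ∃ (J : ℕ) (α β : Fin J → ℝ), ∀ x ∈ K, |∑ j, α j * Real.exp (β j * x) - g x| < ε := by
  have hg_log : ContinuousOn (g ∘ Real.log) (Real.exp '' K) := by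
    refine hg.comp (Real.continuousOn_log.mono ?_) ?_
    · rintro _ ⟨x, -, rfl⟩
      exact (Real.exp_pos x).ne'
    · rintro _ ⟨x, hx, rfl⟩
      rwa [Real.log_exp]
  obtain ⟨p, hp⟩ :=
    exists_polynomial_near_of_continuousOn_of_isCompact (hK.image Real.continuous_exp) hg_log hε
  refine ⟨p.natDegree + 1, fun j => p.coeff j, fun j => j, fun x hx => ?_⟩
  simpa only [sum_coeff_mul_exp_eq_eval_exp, Function.comp_apply, Real.log_exp]
    using hp _ (Set.mem_image_of_mem _ hx)

noncomputable def softplus (x : ℝ) : ℝ := Real.log (1 + Real.exp x)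

theorem softplus_monotone : Monotone softplus := fun u v h => by
  unfold softplus
  gcongr

theorem softplus_le_softplus_add {u v : ℝ} (h : u ≤ v) : softplus v ≤ softplus u + (v - u) := by
  have hle : 1 + Real.exp v ≤ Real.exp (v - u) * (1 + Real.exp u) := by
    rw [mul_one_add, ← Real.exp_add, sub_add_cancel]
    linarith [Real.one_le_exp (sub_nonneg.2 h)]
  calc softplus v ≤ Real.log (Real.exp (v - u) * (1 + Real.exp u)) := by
        unfold softplus
        gcongr
    _ = softplus u + (v - u) := by
        rw [Real.log_mul (Real.exp_pos _).ne' (by positivity), Real.log_exp, add_comm]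
        rfl

theorem abs_softplus_sub_softplus_le (a b : ℝ) : |softplus a - softplus b| ≤ |a - b| := by
  wlog h : b ≤ a generalizing a b
  · rw [abs_sub_comm, abs_sub_comm a]
    exact this b a (le_of_not_ge h)
  rw [abs_of_nonneg (sub_nonneg.2 (softplus_monotone h)), abs_of_nonneg (sub_nonneg.2 h)]
  linarith [softplus_le_softplus_add h]

theorem softplus_log_exp_sub_one {y : ℝ} (hy : 0 < y) :
    softplus (Real.log (Real.exp y - 1)) = y := by
  rw [softplus, Real.exp_log (sub_pos.2 (Real.one_lt_exp_iff.2 hy)), add_sub_cancel, Real.log_exp]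

/-- For any compact `K ⊂ ℝ`, the class
`f_SP ∘ Σ(φ_EXP)` of functions `x ↦ log (1 + exp (∑ⱼ αⱼ exp (βⱼ x)))` is
uniformly dense in `C(K, ℝ₊₊)`. -/
theorem softplus_expSum_uniformly_dense
    (K : Set ℝ) (hK : IsCompact K)
    (f : ℝ → ℝ) (hf_cont : ContinuousOn f K) (hf_pos : ∀ x ∈ K, 0 < f x)
    (ε : ℝ) (hε : 0 < ε) :
    ∃ (J : ℕ) (α β : Fin J → ℝ),
      ∀ x ∈ K,
        |Real.log (1 + Real.exp (∑ j : Fin J, α j * Real.exp (β j * x))) - f x|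
          < ε := by
  have hg : ContinuousOn (fun x => Real.log (Real.exp (f x) - 1)) K :=
    (hf_cont.rexp.sub continuousOn_const).log fun x hx =>
      (sub_pos.2 (Real.one_lt_exp_iff.2 (hf_pos x hx))).ne'
  obtain ⟨J, α, β, hclose⟩ := exists_expSum_near_of_continuousOn hK hg hε
  refine ⟨J, α, β, fun x hx => ?_⟩
  calc |softplus (∑ j, α j * Real.exp (β j * x)) - f x|
      = |softplus (∑ j, α j * Real.exp (β j * x)) - softplus (Real.log (Real.exp (f x) - 1))| := by
        rw [softplus_log_exp_sub_one (hf_pos x hx)]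
    _ ≤ |∑ j, α j * Real.exp (β j * x) - Real.log (Real.exp (f x) - 1)| :=
        abs_softplus_sub_softplus_le _ _
    _ < ε := hclose x hx
end
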